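/- Let (N,v) be a minimal incomplete game with n ≥ 2 players and v({i}) ≥ 0 for all i ∈ N. Then (N,v) admits a positive extension if and only if its total excess satisfies Δ ≥ 0. -/
import Mathlib


open Finset

/-- The Shapley value `φ_i(w) = (1/n) ∑_{S ⊆ N∖{i}} C(n-1,|S|)⁻¹ (w(S∪{i}) - w(S))`. -/
noncomputable def shapley (n : ℕ) (w : Finset (Fin n) → ℝ) (i : Fin n) : ℝ :=
  (1 / (n : ℝ)) * ∑ S ∈ (Finset.univ.erase i).powerset,
    ((Nat.choose (n - 1) S.card : ℝ))⁻¹ * (w (insert i S) - w S)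

/-- A game is convex if `w(S) + w(T) ≤ w(S ∪ T) + w(S ∩ T)` for all coalitions. -/
def IsConvexGame {n : ℕ} (w : Finset (Fin n) → ℝ) : Prop :=
  ∀ S T : Finset (Fin n), w S + w T ≤ w (S ∪ T) + w (S ∩ T)

/-- The upper vector `b^w_i = w(N) - w(N∖{i})`. -/
noncomputable def upperVec {n : ℕ} (w : Finset (Fin n) → ℝ) (i : Fin n) : ℝ :=
  w Finset.univ - w (Finset.univ.erase i)

/-- The gap function `g^w(S) = ∑_{i∈S} b^w_i - w(S)`. -/
noncomputable def gap {n : ℕ} (w : Finset (Fin n) → ℝ) (S : Finset (Fin n)) : ℝ :=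
  (∑ i ∈ S, upperVec w i) - w S

/-- A game is 1-convex if `∑ b^w_i ≥ w(N)` and
`w(S) ≤ w(N) - ∑_{i ∈ N∖S} b^w_i` for every nonempty `S`. -/
def IsOneConvex {n : ℕ} (w : Finset (Fin n) → ℝ) : Prop :=
  w Finset.univ ≤ (∑ i, upperVec w i) ∧
  ∀ S : Finset (Fin n), S.Nonempty →
    w S ≤ w Finset.univ - ∑ i ∈ Finset.univ \ S, upperVec w i

/-- `w` is an extension of the minimal incomplete game given by singleton values `v`
and grand-coalition value `vN`. -/
def IsExtension {n : ℕ} (v : Fin n → ℝ) (vN : ℝ) (w : Finset (Fin n) → ℝ) : Prop :=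
  w ∅ = 0 ∧ (∀ i, w {i} = v i) ∧ w Finset.univ = vN

/-- Harsanyi dividend `d_w(T) = ∑_{S ⊆ T} (-1)^{|T|-|S|} w(S)`. -/
noncomputable def dividend {n : ℕ} (w : Finset (Fin n) → ℝ) (T : Finset (Fin n)) : ℝ :=
  ∑ S ∈ T.powerset, (-1 : ℝ) ^ (T.card - S.card) * w S

/-- A game is positive if all Harsanyi dividends of nonempty coalitions are nonnegative. -/
def IsPositive {n : ℕ} (w : Finset (Fin n) → ℝ) : Prop :=
  ∀ T : Finset (Fin n), T.Nonempty → 0 ≤ dividend w T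

/-- The extreme game `v^k`. -/
noncomputable def vgame (n : ℕ) (v : Fin n → ℝ) (Δ : ℝ) (k : Fin n)
    (S : Finset (Fin n)) : ℝ :=
  if 2 ≤ S.card ∧ k ∈ S then (∑ j ∈ S, v j) + Δ else ∑ j ∈ S, v j

/-- The extreme game `v_T` (for `T` with `|T| ≥ 2`). -/
noncomputable def vTgame (n : ℕ) (v : Fin n → ℝ) (Δ : ℝ) (T : Finset (Fin n))
    (S : Finset (Fin n)) : ℝ :=
  if T ⊆ S then (∑ j ∈ S, v j) + Δ else ∑ j ∈ S, v j

/-- The extreme-ray game `e_T`. -/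
def eTgame (n : ℕ) (T S : Finset (Fin n)) : ℝ := if S = T then -1 else 0

/-- The index set `E = {T ⊆ N : 2 ≤ |T| ≤ n-2}`. -/
def raysIndex (n : ℕ) : Finset (Finset (Fin n)) :=
  Finset.univ.filter (fun T => 2 ≤ T.card ∧ T.card ≤ n - 2)

/-- The index set `N₁ = {T ⊆ N : |T| ≥ 2}`. -/
def coalN1 (n : ℕ) : Finset (Finset (Fin n)) :=
  Finset.univ.filter (fun T => 2 ≤ T.card)

/-- The convex combination `w_α = ∑_k α_k v^k`. -/
noncomputable def walpha (n : ℕ) (v : Fin n → ℝ) (Δ : ℝ) (α : Fin n → ℝ)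
    (S : Finset (Fin n)) : ℝ :=
  ∑ k, α k * vgame n v Δ k S

/-- The game `w_{α,β} = ∑_k α_k v^k + ∑_{T∈E} β_T e_T`. -/
noncomputable def walphabeta (n : ℕ) (v : Fin n → ℝ) (Δ : ℝ) (α : Fin n → ℝ)
    (β : Finset (Fin n) → ℝ) (S : Finset (Fin n)) : ℝ :=
  (∑ k, α k * vgame n v Δ k S) + ∑ T ∈ raysIndex n, β T * eTgame n T S

/-- The game `w_A = ∑_{T∈N₁} α_T v_T`. -/
noncomputable def wAgame (n : ℕ) (v : Fin n → ℝ) (Δ : ℝ) (A : Finset (Fin n) → ℝ)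
    (S : Finset (Fin n)) : ℝ :=
  ∑ T ∈ coalN1 n, A T * vTgame n v Δ T S

/-- The imputation set `I(v)`. -/
def imputations (n : ℕ) (v : Fin n → ℝ) (vN : ℝ) : Set (Fin n → ℝ) :=
  {x | (∑ i, x i) = vN ∧ ∀ i, v i ≤ x i}

/-- The imputation `I^k`. -/
noncomputable def Ik (n : ℕ) (v : Fin n → ℝ) (Δ : ℝ) (k : Fin n) : Fin n → ℝ :=
  fun i => if i = k then v i + Δ else v i

/-- The imputation `I^α`. -/
noncomputable def Ialpha (n : ℕ) (v : Fin n → ℝ) (Δ : ℝ) (α : Fin n → ℝ) : Fin n → ℝ :=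
  fun i => v i + α i * Δ

/-- The core of a game. -/
def core {n : ℕ} (w : Finset (Fin n) → ℝ) : Set (Fin n → ℝ) :=
  {x | (∑ i, x i) = w Finset.univ ∧ ∀ S : Finset (Fin n), w S ≤ ∑ i ∈ S, x i}

/-- The marginal vector `m_σ^w`. -/
noncomputable def margVec {n : ℕ} (w : Finset (Fin n) → ℝ) (σ : Equiv.Perm (Fin n))
    (i : Fin n) : ℝ :=
  w (insert i (Finset.univ.filter (fun j => σ j < σ i))) -
    w (Finset.univ.filter (fun j => σ j < σ i))

/-- The Weber set: the convex hull of all marginal vectors. -/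
noncomputable def weber {n : ℕ} (w : Finset (Fin n) → ℝ) : Set (Fin n → ℝ) :=
  convexHull ℝ {m | ∃ σ : Equiv.Perm (Fin n), m = margVec w σ}

/-- The maximal surplus `s_{ij}(x,w) = max {w(S) - x(S) : i ∈ S, j ∉ S}`. -/
noncomputable def surplus {n : ℕ} (w : Finset (Fin n) → ℝ) (x : Fin n → ℝ)
    (i j : Fin n) : ℝ :=
  sSup {r : ℝ | ∃ S : Finset (Fin n), i ∈ S ∧ j ∉ S ∧ r = w S - ∑ m ∈ S, x m}

/-- The prekernel of a game. -/
def prekernel {n : ℕ} (w : Finset (Fin n) → ℝ) : Set (Fin n → ℝ) :=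
  {x | (∑ i, x i) = w Finset.univ ∧
    ∀ i j : Fin n, i ≠ j → surplus w x i j = surplus w x j i}

lemma mykey0 {α : Type*} [DecidableEq α] (A : Finset α) :
    (∑ X ∈ A.powerset, (-1 : ℝ) ^ X.card) = if A = ∅ then 1 else 0 := by
  have := @Finset.sum_powerset_neg_one_pow_card α _ A
  have h2 : ((∑ X ∈ A.powerset, (-1 : ℤ) ^ X.card : ℤ) : ℝ)
      = ∑ X ∈ A.powerset, (-1 : ℝ) ^ X.card := by push_cast; rfl
  rw [← h2, this]
  split <;> norm_num

lemma mykey {n : ℕ} (U R : Finset (Fin n)) (h : R ⊆ U) :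
    ∑ S ∈ U.powerset.filter (fun S => R ⊆ S), (-1:ℝ)^(S.card - R.card)
      = if R = U then 1 else 0 := by
  have := Finset.sum_bij' (s := U.powerset.filter (fun S => R ⊆ S))
    (t := (U \ R).powerset)
    (i := fun S _ => S \ R) (j := fun X _ => R ∪ X)
    (f := fun S => (-1:ℝ)^(S.card - R.card)) (g := fun X => (-1:ℝ)^X.card)
    ?_ ?_ ?_ ?_ ?_
  · rw [this, mykey0]
    by_cases hRU : R = U
    · subst hRU; simp
    · rw [if_neg hRU, if_neg]
      intro hz
      rw [Finset.sdiff_eq_empty_iff_subset] at hz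
      exact hRU (Finset.Subset.antisymm h hz)
  · intro S hS
    simp only [mem_filter, mem_powerset] at hS ⊢
    exact Finset.sdiff_subset_sdiff hS.1 (le_refl _)
  · intro X hX
    simp only [mem_powerset] at hX
    simp only [mem_filter, mem_powerset]
    exact ⟨Finset.union_subset h (hX.trans (Finset.sdiff_subset)), Finset.subset_union_left⟩
  · intro S hS
    simp only [mem_filter, mem_powerset] at hS
    show R ∪ S \ R = S
    exact Finset.union_sdiff_of_subset hS.2
  · intro X hX
    simp only [mem_powerset] at hX
    show (R ∪ X) \ R = X
    rw [Finset.union_sdiff_cancel_left]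
    exact (Finset.disjoint_of_subset_right hX Finset.sdiff_disjoint.symm)
  · intro S hS
    simp only [mem_filter, mem_powerset] at hS
    show (-1:ℝ)^(S.card - R.card) = (-1:ℝ)^((S \ R).card)
    rw [Finset.card_sdiff_of_subset hS.2]

lemma moebius {n : ℕ} (w : Finset (Fin n) → ℝ) (U : Finset (Fin n)) :
    ∑ S ∈ U.powerset, dividend w S = w U := by
  unfold dividend
  have step1 : ∀ S ∈ U.powerset,
      ∑ R ∈ S.powerset, (-1:ℝ)^(S.card - R.card) * w R
        = ∑ R ∈ U.powerset, if R ⊆ S then (-1:ℝ)^(S.card - R.card) * w R else 0 := by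
    intro S hS
    simp only [mem_powerset] at hS
    rw [← Finset.sum_filter]
    apply Finset.sum_congr _ (fun _ _ => rfl)
    ext R
    simp only [mem_powerset, mem_filter]
    exact ⟨fun h => ⟨h.trans hS, h⟩, fun h => h.2⟩
  rw [Finset.sum_congr rfl step1, Finset.sum_comm]
  have step2 : ∀ R ∈ U.powerset,
      (∑ S ∈ U.powerset, if R ⊆ S then (-1:ℝ)^(S.card - R.card) * w R else 0)
        = if R = U then w R else 0 := by
    intro R hR
    simp only [mem_powerset] at hR
    rw [← Finset.sum_filter]
    have : ∑ S ∈ U.powerset.filter (fun S => R ⊆ S), (-1:ℝ)^(S.card - R.card) * w R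
        = (∑ S ∈ U.powerset.filter (fun S => R ⊆ S), (-1:ℝ)^(S.card - R.card)) * w R := by
      rw [Finset.sum_mul]
    rw [this, mykey U R hR]
    split <;> simp
  rw [Finset.sum_congr rfl step2]
  simp

lemma dividend_indicator {n : ℕ} (A T : Finset (Fin n)) (c : ℝ) :
    dividend (fun S => if A ⊆ S then c else 0) T = if T = A then c else 0 := by
  unfold dividend
  simp only [mul_ite, mul_zero]
  rw [← Finset.sum_filter]
  by_cases hAT : A ⊆ T
  · have hsign : ∀ S ∈ T.powerset.filter (fun S => A ⊆ S),
        (-1:ℝ)^(T.card - S.card) * c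
          = (-1:ℝ)^(T.card - A.card) * ((-1:ℝ)^(S.card - A.card) * c) := by
      intro S hS
      simp only [mem_filter, mem_powerset] at hS
      have h1 : A.card ≤ S.card := Finset.card_le_card hS.2
      have h2 : S.card ≤ T.card := Finset.card_le_card hS.1
      have e : (-1:ℝ)^(T.card - A.card) * (-1:ℝ)^(S.card - A.card)
          = (-1:ℝ)^(T.card - S.card) := by
        rw [← pow_add, show (T.card - A.card) + (S.card - A.card)
          = (T.card - S.card) + 2 * (S.card - A.card) by omega, pow_add, pow_mul]
        norm_num
      rw [← mul_assoc, e]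
    rw [Finset.sum_congr rfl hsign, ← Finset.mul_sum, ← Finset.sum_mul,
      mykey T A hAT]
    by_cases hTA : T = A
    · subst hTA; simp
    · rw [if_neg hTA, if_neg (fun h => hTA h.symm)]; ring
  · rw [if_neg (fun h => hAT (by rw [h])), Finset.sum_eq_zero]
    intro S hS
    simp only [mem_filter, mem_powerset] at hS
    exact absurd (hS.2.trans hS.1) hAT

lemma dividend_singleton {n : ℕ} (w : Finset (Fin n) → ℝ) (i : Fin n) :
    dividend w {i} = w {i} - w ∅ := by
  unfold dividend
  have hp : ({i} : Finset (Fin n)).powerset = {∅, {i}} := by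
    ext S; simp [Finset.subset_singleton_iff]
  rw [hp, Finset.sum_pair (by exact fun h => (Finset.singleton_ne_empty i) h.symm : (∅ : Finset (Fin n)) ≠ {i})]
  simp
  ring

lemma dividend_empty {n : ℕ} (w : Finset (Fin n) → ℝ) :
    dividend w ∅ = w ∅ := by
  unfold dividend
  simp

lemma dividend_split {n : ℕ} (v : Fin n → ℝ) (Δ : ℝ) (T : Finset (Fin n)) :
    dividend (fun S => (∑ i, if ({i} : Finset (Fin n)) ⊆ S then v i else 0)
        + (if (Finset.univ : Finset (Fin n)) ⊆ S then Δ else 0)) T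
      = (∑ i, dividend (fun S => if ({i} : Finset (Fin n)) ⊆ S then v i else 0) T)
        + dividend (fun S => if (Finset.univ : Finset (Fin n)) ⊆ S then Δ else 0) T := by
  simp only [dividend, mul_add, Finset.sum_add_distrib, Finset.mul_sum]
  rw [Finset.sum_comm]

/-- a minimal incomplete game with nonnegative singleton values admits a
positive extension iff `Δ ≥ 0`. -/
theorem stmt19 (n : ℕ) (hn : 2 ≤ n) (v : Fin n → ℝ) (hv : ∀ i, 0 ≤ v i)
    (vN : ℝ) (Δ : ℝ) (hΔdef : Δ = vN - ∑ i, v i) :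
    (∃ w : Finset (Fin n) → ℝ, IsExtension v vN w ∧ IsPositive w) ↔ 0 ≤ Δ := by
  constructor
  · rintro ⟨w, ⟨h0, h1, hN⟩, hpos⟩
    have hmo := moebius w (Finset.univ : Finset (Fin n))
    have hmemP : (∅ : Finset (Fin n)) ∈ (Finset.univ : Finset (Fin n)).powerset := by
      simp
    rw [← Finset.add_sum_erase _ _ hmemP, dividend_empty, h0, zero_add] at hmo
    have himg : ∑ i, v i
        = ∑ S ∈ (Finset.univ : Finset (Fin n)).image (fun i => ({i} : Finset (Fin n))),
            dividend w S := by
      rw [Finset.sum_image (fun a _ b _ h => Finset.singleton_injective h)]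
      apply Finset.sum_congr rfl
      intro i _
      rw [dividend_singleton w i, h0, h1 i, sub_zero]
    have hle : ∑ i, v i ≤ ∑ S ∈ ((Finset.univ : Finset (Fin n)).powerset).erase ∅,
        dividend w S := by
      rw [himg]
      apply Finset.sum_le_sum_of_subset_of_nonneg
      · intro S hS
        simp only [Finset.mem_image, Finset.mem_univ, true_and] at hS
        obtain ⟨i, rfl⟩ := hS
        simp [Finset.mem_erase, Finset.singleton_ne_empty]
      · intro S hS _
        rw [Finset.mem_erase] at hS
        exact hpos S (Finset.nonempty_iff_ne_empty.mpr hS.1)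
    rw [hmo, hN] at hle
    linarith
  · intro hΔ
    refine ⟨fun S => (∑ i, if ({i} : Finset (Fin n)) ⊆ S then v i else 0)
        + (if (Finset.univ : Finset (Fin n)) ⊆ S then Δ else 0), ⟨?_, ?_, ?_⟩, ?_⟩
    · have h1 : ∀ i : Fin n, ¬ (({i} : Finset (Fin n)) ⊆ ∅) := by
        intro i h; exact absurd (h (Finset.mem_singleton_self i)) (Finset.notMem_empty i)
      have h2 : ¬ ((Finset.univ : Finset (Fin n)) ⊆ ∅) := by
        intro h
        exact absurd (h (Finset.mem_univ ⟨0, by omega⟩)) (Finset.notMem_empty _)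
      simp [h1, h2]
    · intro j
      have h2 : ¬ ((Finset.univ : Finset (Fin n)) ⊆ ({j} : Finset (Fin n))) := by
        intro h
        have := Finset.card_le_card h
        simp at this
        omega
      simp [Finset.singleton_subset_iff, h2]
    · simp [Finset.singleton_subset_iff, hΔdef]
    · intro T hT
      rw [dividend_split]
      apply add_nonneg
      · apply Finset.sum_nonneg
        intro i _
        rw [dividend_indicator]
        split
        · exact hv i
        · exact le_refl 0
      · rw [dividend_indicator]
        split
        · exact hΔ
        · exact le_refl 0
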